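/- Let x ∈ Q(R) be dominant and let z ∈ Q(R) satisfy ⟨z, ϖ_i⟩ ≤ ⟨x, ϖ_i⟩ for all i ∈ I. Suppose i₁, …, i_k ∈ I are distinct indices such that (b) ⟨z, α_{i₁}^∨⟩ = −1, (c) ⟨z, α_{i_j}^∨⟩ = 0 for j = 2, …, k, and (d) ⟨α_{i_j}, α_{i_{j+1}}^∨⟩ = −1 for j = 1, …, k−1, and suppose that z' := z + α_{i₁} + α_{i₂} + ⋯ + α_{i_k} is dominant. Then ⟨z', ϖ_i⟩ ≤ ⟨x, ϖ_i⟩ for all i ∈ I. -/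

import Mathlib

open Module

/-- An irreducible reduced (crystallographic) root system `R` in a real vector space `V`
(playing the role of `Q(R) ⊗ ℝ`), together with a base of simple roots indexed by `ι`,
the coroot pairings `u ↦ ⟨u, α^∨⟩` realised as linear functionals, and the fundamental
coweights `ϖ_i`, characterised by `⟨ϖ_i, α_j⟩ = δ_{ij}`. -/
structure RootSystemData (ι : Type*) (V : Type*) [Fintype ι] [DecidableEq ι]
    [AddCommGroup V] [Module ℝ V] where
  /-- the set of roots `R` -/
  isRoot : Set V
  /-- the coroot pairing: `coroot a u = ⟨u, a^∨⟩` -/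
  coroot : V → (V →ₗ[ℝ] ℝ)
  /-- the simple roots `α_i` -/
  sroot : ι → V
  sroot_mem : ∀ i, sroot i ∈ isRoot
  coroot_self : ∀ a ∈ isRoot, coroot a a = 2
  crystallographic : ∀ a ∈ isRoot, ∀ b ∈ isRoot, ∃ n : ℤ, coroot a b = (n : ℝ)
  reflect_mem : ∀ a ∈ isRoot, ∀ b ∈ isRoot, b - coroot a b • a ∈ isRoot
  reduced : ∀ a ∈ isRoot, ∀ t : ℝ, t • a ∈ isRoot → t = 1 ∨ t = -1
  finite : isRoot.Finite
  ne_zero : ∀ a ∈ isRoot, a ≠ 0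
  span_top : Submodule.span ℝ isRoot = ⊤
  /-- every root is a nonnegative or nonpositive integral combination of the simple roots -/
  base : ∀ a ∈ isRoot, (∃ c : ι → ℕ, a = ∑ i, (c i : ℝ) • sroot i) ∨
    (∃ c : ι → ℕ, a = -∑ i, (c i : ℝ) • sroot i)
  /-- the root system is irreducible -/
  irreducible : ∀ s t : Set V, isRoot = s ∪ t →
    (∀ a ∈ s, ∀ b ∈ t, coroot a b = 0) → s = ∅ ∨ t = ∅
  /-- the fundamental coweights `ϖ_i`, as linear functionals `u ↦ ⟨u, ϖ_i⟩` -/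
  coweight : ι → (V →ₗ[ℝ] ℝ)
  coweight_sroot : ∀ i j, coweight i (sroot j) = if i = j then 1 else 0

namespace RootSystemData

variable {ι V : Type*} [Fintype ι] [DecidableEq ι] [AddCommGroup V] [Module ℝ V]
variable (P : RootSystemData ι V)

/-- The root lattice `Q(R)`, i.e. the `ℤ`-span of the roots. -/
def rootLattice : AddSubgroup V := AddSubgroup.closure P.isRoot

/-- The Weyl group `W`, generated by the reflections in the roots. -/
def weylGroup : Subgroup (V ≃ₗ[ℝ] V) :=
  Subgroup.closure { w | ∃ a, ∃ ha : a ∈ P.isRoot, w = Module.reflection (P.coroot_self a ha) }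

/-- The Weyl orbit `O_x = {wx : w ∈ W}` of an element `x`. -/
def orbit (x : V) : Set V := { v | ∃ w ∈ P.weylGroup, v = w x }

/-- An element `u` is dominant if `⟨u, α_i^∨⟩ ≥ 0` for all `i ∈ I`. -/
def IsDominant (u : V) : Prop := ∀ i, 0 ≤ P.coroot (P.sroot i) u

/-- The simple reflection `s_{α_i}`. -/
def sref (i : ι) : V ≃ₗ[ℝ] V :=
  Module.reflection (P.coroot_self (P.sroot i) (P.sroot_mem i))

end RootSystemData

/-!
Put `y = x - z`; it lies in the root lattice and has nonnegative coordinates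
`⟨y, ϖ_i⟩` in the basis of simple roots. If the coordinate of `y` at a simple root `α_i`
vanishes, then `⟨y, α_i^∨⟩ = ∑_j ⟨y, ϖ_j⟩ ⟨α_j, α_i^∨⟩` is a sum of nonpositive terms.
Along the chain this is impossible: at `i₁` we have `⟨y, α_{i₁}^∨⟩ = ⟨x, α_{i₁}^∨⟩ + 1 > 0`,
and at `i_{j+1}` we have `⟨y, α_{i_{j+1}}^∨⟩ = ⟨x, α_{i_{j+1}}^∨⟩ ≥ 0` while the term of
`i_j` is strictly negative by induction. So every `⟨y, ϖ_{i_j}⟩` is a positive integer,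
hence at least `1`, which is exactly the room needed to add `α_{i_j}` to `z`.
-/

namespace RootSystemData

variable {ι V : Type*} [Fintype ι] [DecidableEq ι] [AddCommGroup V] [Module ℝ V]
variable (P : RootSystemData ι V)

lemma coweight_sum_smul_sroot (c : ι → ℝ) (i : ι) :
    P.coweight i (∑ j, c j • P.sroot j) = c i := by
  simp [map_sum, P.coweight_sroot]

lemma span_range_sroot : Submodule.span ℝ (Set.range P.sroot) = ⊤ := by
  have hsum (c : ι → ℕ) : ∑ i, (c i : ℝ) • P.sroot i ∈ Submodule.span ℝ (Set.range P.sroot) :=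
    Submodule.sum_mem _ fun i _ => Submodule.smul_mem _ _ (Submodule.subset_span ⟨i, rfl⟩)
  rw [eq_top_iff, ← P.span_top, Submodule.span_le]
  intro a ha
  rcases P.base a ha with ⟨c, rfl⟩ | ⟨c, rfl⟩
  · exact hsum c
  · exact neg_mem (hsum c)

lemma sum_coweight_smul_sroot (v : V) : ∑ i, P.coweight i v • P.sroot i = v := by
  have hid : ∑ i, (P.coweight i).smulRight (P.sroot i) = LinearMap.id := by
    refine LinearMap.ext_on P.span_range_sroot ?_
    rintro _ ⟨j, rfl⟩
    simp [P.coweight_sroot]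
  simpa using LinearMap.congr_fun hid v

lemma coroot_eq_sum_coweight_mul (a v : V) :
    P.coroot a v = ∑ i, P.coweight i v * P.coroot a (P.sroot i) := by
  conv_lhs => rw [← P.sum_coweight_smul_sroot v]
  simp [map_sum]

lemma exists_int_coweight_of_mem_rootLattice {v : V} (hv : v ∈ P.rootLattice) (i : ι) :
    ∃ n : ℤ, P.coweight i v = n := by
  induction hv using AddSubgroup.closure_induction with
  | mem a ha =>
    rcases P.base a ha with ⟨c, rfl⟩ | ⟨c, rfl⟩
    · exact ⟨c i, by simp [P.coweight_sum_smul_sroot]⟩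
    · exact ⟨-(c i), by simp [P.coweight_sum_smul_sroot]⟩
  | zero => exact ⟨0, by simp⟩
  | add a b _ _ ha hb =>
    obtain ⟨m, hm⟩ := ha
    obtain ⟨n, hn⟩ := hb
    exact ⟨m + n, by simp [hm, hn]⟩
  | neg a _ ha =>
    obtain ⟨m, hm⟩ := ha
    exact ⟨-m, by simp [hm]⟩

lemma one_le_coweight_of_mem_rootLattice {v : V} (hv : v ∈ P.rootLattice) {i : ι}
    (hpos : 0 < P.coweight i v) : 1 ≤ P.coweight i v := by
  obtain ⟨n, hn⟩ := P.exists_int_coweight_of_mem_rootLattice hv i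
  rw [hn] at hpos ⊢
  exact_mod_cast (Int.cast_pos.mp hpos : 0 < n)

/-- Simple roots pair nonpositively: `s_{α_j} α_i = α_i - ⟨α_i, α_j^∨⟩ α_j` is a root, and its
`α_i`-coordinate `1` forces it to be positive, so its `α_j`-coordinate is `≥ 0`. -/
lemma coroot_sroot_nonpos {i j : ι} (h : i ≠ j) : P.coroot (P.sroot j) (P.sroot i) ≤ 0 := by
  set n := P.coroot (P.sroot j) (P.sroot i)
  have hβ : P.sroot i - n • P.sroot j ∈ P.isRoot :=
    P.reflect_mem _ (P.sroot_mem j) _ (P.sroot_mem i)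
  rcases P.base _ hβ with ⟨c, hc⟩ | ⟨c, hc⟩
  · have hj := congrArg (P.coweight j) hc
    simp [P.coweight_sroot, P.coweight_sum_smul_sroot, Ne.symm h] at hj
    linarith [(c j).cast_nonneg (α := ℝ)]
  · have hi := congrArg (P.coweight i) hc
    simp [P.coweight_sroot, P.coweight_sum_smul_sroot, h] at hi
    linarith [(c i).cast_nonneg (α := ℝ)]

lemma coroot_le_coweight_mul_of_coweight_eq_zero {y : V} (hy : ∀ i, 0 ≤ P.coweight i y)
    {i : ι} (hi : P.coweight i y = 0) (j : ι) :
    P.coroot (P.sroot i) y ≤ P.coweight j y * P.coroot (P.sroot i) (P.sroot j) := by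
  have hterm : ∀ l, P.coweight l y * P.coroot (P.sroot i) (P.sroot l) ≤ 0 := by
    intro l
    by_cases hl : l = i
    · simp [hl, hi]
    · exact mul_nonpos_of_nonneg_of_nonpos (hy l) (P.coroot_sroot_nonpos hl)
  rw [P.coroot_eq_sum_coweight_mul, ← Finset.add_sum_erase _ _ (Finset.mem_univ j)]
  linarith [Finset.sum_nonpos fun l (_ : l ∈ Finset.univ.erase j) => hterm l]

lemma coweight_pos_of_coroot_pos {y : V} (hy : ∀ i, 0 ≤ P.coweight i y) {i : ι}
    (h : 0 < P.coroot (P.sroot i) y) : 0 < P.coweight i y := by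
  refine (hy i).lt_of_ne fun hi => ?_
  have := P.coroot_le_coweight_mul_of_coweight_eq_zero hy hi.symm i
  rw [← hi, zero_mul] at this
  linarith

lemma coweight_pos_of_coweight_pos_of_coroot_neg {y : V} (hy : ∀ i, 0 ≤ P.coweight i y)
    {i j : ι} (hcoroot : 0 ≤ P.coroot (P.sroot i) y) (hj : 0 < P.coweight j y)
    (hij : P.coroot (P.sroot i) (P.sroot j) < 0) : 0 < P.coweight i y := by
  refine (hy i).lt_of_ne fun hi => ?_
  have := P.coroot_le_coweight_mul_of_coweight_eq_zero hy hi.symm j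
  nlinarith

lemma coweight_pos_of_chain {y : V} (hy : ∀ i, 0 ≤ P.coweight i y)
    {k : ℕ} (hk : 0 < k) (ind : Fin k → ι)
    (hfirst : 0 < P.coroot (P.sroot (ind ⟨0, hk⟩)) y)
    (hnext : ∀ j : Fin k, 0 < j.1 → 0 ≤ P.coroot (P.sroot (ind j)) y)
    (hd : ∀ j : ℕ, ∀ hj : j + 1 < k,
      P.coroot (P.sroot (ind ⟨j + 1, hj⟩)) (P.sroot (ind ⟨j, Nat.lt_of_succ_lt hj⟩)) = -1)
    (j : Fin k) : 0 < P.coweight (ind j) y := by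
  obtain ⟨m, hm⟩ := j
  induction m with
  | zero => exact P.coweight_pos_of_coroot_pos hy hfirst
  | succ m ih =>
    refine P.coweight_pos_of_coweight_pos_of_coroot_neg hy (hnext _ m.succ_pos)
      (ih (Nat.lt_of_succ_lt hm)) ?_
    rw [hd m hm]
    norm_num

lemma coweight_sum_sroot_comp_of_injective {κ : Type*} [Fintype κ] {f : κ → ι}
    (hf : Function.Injective f) (i : ι) [Decidable (i ∈ Set.range f)] :
    P.coweight i (∑ j, P.sroot (f j)) = if i ∈ Set.range f then 1 else 0 := by
  simp only [map_sum, P.coweight_sroot]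
  split_ifs with hi
  · obtain ⟨j₀, rfl⟩ := hi
    rw [Finset.sum_eq_single j₀ (fun j _ hj => if_neg fun h => hj (hf h).symm) (by simp)]
    simp
  · exact Finset.sum_eq_zero fun j _ => if_neg fun h => hi ⟨j, h.symm⟩

end RootSystemData

theorem statement2_general {ι V : Type*} [Fintype ι] [DecidableEq ι] [AddCommGroup V] [Module ℝ V]
    (P : RootSystemData ι V) (x z : V)
    (hx : x ∈ P.rootLattice) (hxdom : P.IsDominant x)
    (hzQ : z ∈ P.rootLattice)
    (hzx : ∀ i, P.coweight i z ≤ P.coweight i x)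
    (k : ℕ) (hk : 0 < k) (ind : Fin k → ι) (hinj : Function.Injective ind)
    (hb : P.coroot (P.sroot (ind ⟨0, hk⟩)) z = -1)
    (hc : ∀ j : Fin k, 0 < j.1 → P.coroot (P.sroot (ind j)) z = 0)
    (hd : ∀ j : ℕ, ∀ hj : j + 1 < k,
      P.coroot (P.sroot (ind ⟨j + 1, hj⟩)) (P.sroot (ind ⟨j, Nat.lt_of_succ_lt hj⟩)) = -1) :
    ∀ i, P.coweight i (z + ∑ j : Fin k, P.sroot (ind j)) ≤ P.coweight i x := by
  classical
  have hy : ∀ i, 0 ≤ P.coweight i (x - z) := fun i => by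
    rw [map_sub]
    linarith [hzx i]
  have hpos : ∀ j, 0 < P.coweight (ind j) (x - z) := by
    refine P.coweight_pos_of_chain hy hk ind ?_ (fun j hj => ?_) hd
    · rw [map_sub, hb]
      linarith [hxdom (ind ⟨0, hk⟩)]
    · rw [map_sub, hc j hj, sub_zero]
      exact hxdom _
  intro i
  rw [map_add, P.coweight_sum_sroot_comp_of_injective hinj]
  split_ifs with hi
  · obtain ⟨j, rfl⟩ := hi
    have := P.one_le_coweight_of_mem_rootLattice (sub_mem hx hzQ) (hpos j)
    rw [map_sub] at this
    linarith
  · simpa using hzx i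

/-- Let `x ∈ Q(R)` be dominant and `z ∈ Q(R)` with `⟨z, ϖ_i⟩ ≤ ⟨x, ϖ_i⟩`
for all `i`. Suppose `i₁, …, i_k ∈ I` are distinct indices such that
(b) `⟨z, α_{i₁}^∨⟩ = −1`, (c) `⟨z, α_{i_j}^∨⟩ = 0` for `j = 2, …, k`, and
(d) `⟨α_{i_j}, α_{i_{j+1}}^∨⟩ = −1` for `j = 1, …, k−1`, and suppose that
`z' := z + α_{i₁} + ⋯ + α_{i_k}` is dominant. Then `⟨z', ϖ_i⟩ ≤ ⟨x, ϖ_i⟩` for all `i ∈ I`. -/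
theorem statement2 {ι V : Type*} [Fintype ι] [DecidableEq ι] [AddCommGroup V] [Module ℝ V]
    (P : RootSystemData ι V) (x z : V)
    (hx : x ∈ P.rootLattice) (hxdom : P.IsDominant x)
    (hzQ : z ∈ P.rootLattice)
    (hzx : ∀ i, P.coweight i z ≤ P.coweight i x)
    (k : ℕ) (hk : 0 < k) (ind : Fin k → ι) (hinj : Function.Injective ind)
    (hb : P.coroot (P.sroot (ind ⟨0, hk⟩)) z = -1)
    (hc : ∀ j : Fin k, 0 < j.1 → P.coroot (P.sroot (ind j)) z = 0)
    (hd : ∀ j : ℕ, ∀ hj : j + 1 < k,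
      P.coroot (P.sroot (ind ⟨j + 1, hj⟩)) (P.sroot (ind ⟨j, Nat.lt_of_succ_lt hj⟩)) = -1)
    (hdom : P.IsDominant (z + ∑ j : Fin k, P.sroot (ind j))) :
    ∀ i, P.coweight i (z + ∑ j : Fin k, P.sroot (ind j)) ≤ P.coweight i x :=
  statement2_general P x z hx hxdom hzQ hzx k hk ind hinj hb hc hd
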